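/- arXiv:1302.5121 — 3 statements merged into one kernel-verified Lean document; each statement's English description precedes it below -/
import Mathlib

section
/- Let G be a triangle-free graph, let u and v be two non-adjacent vertices of G such that every path in G between u and v has length at least 4. Then the graph G' obtained from G by identifying u and v (and removing any resulting parallel edges) is triangle-free, and every proper 3-coloring of G' gives rise to a proper 3-coloring of G in which u and v receive the same color. -/
/-- `l` lists the vertices of a cycle of `G` in cyclic order. -/
def IsCycleList {V : Type} (G : SimpleGraph V) (l : List V) : Prop :=
  3 ≤ l.length ∧ l.Nodup ∧ l.Chain' G.Adj ∧
    ∀ h : l ≠ [], G.Adj (l.getLast h) (l.head h)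

/-- The edges of the cycle whose vertices are listed (in cyclic order) by `l`. -/
def cycleEdges {V : Type} (l : List V) : List (Sym2 V) :=
  (l.zip (l.rotate 1)).map fun p => s(p.1, p.2)

/-- A combinatorial model of a finite simple graph drawn in the plane, together with its
faces.  `bounds f l` says that the cycle listed by `l` bounds the face `f`; `vinc v f` says
that the vertex `v` is incident with the face `f`; `inside l` is the set of vertices of the
graph lying in the open disk bounded by the cycle listed by `l`.  Euler's formula and the
face handshake identity are part of the data. -/
structure PlaneGraph (V : Type) [Fintype V] [DecidableEq V] where
  graph : SimpleGraph V
  Face : Type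
  [fintypeFace : Fintype Face]
  [decEqFace : DecidableEq Face]
  outer : Face
  len : Face → ℕ
  bounds : Face → List V → Prop
  vinc : V → Face → Prop
  inside : List V → Set V
  euler : (Fintype.card V : ℤ) - graph.edgeSet.ncard + Fintype.card Face
      = 1 + Nat.card graph.ConnectedComponent
  handshake : (∑ f : Face, (len f : ℤ)) = 2 * graph.edgeSet.ncard
  bounds_isCycle : ∀ f l, bounds f l → IsCycleList graph l
  bounds_len : ∀ f l, bounds f l → len f = l.length
  bounds_rotate : ∀ f l, bounds f l → bounds f (l.rotate 1)
  bounds_reverse : ∀ f l, bounds f l → bounds f l.reverse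
  vinc_ncard_le : ∀ f, Set.ncard {v | vinc v f} ≤ len f
  mem_bounds_vinc : ∀ f l v, bounds f l → v ∈ l → vinc v f

attribute [instance] PlaneGraph.fintypeFace PlaneGraph.decEqFace

namespace PlaneGraph

variable {V : Type} [Fintype V] [DecidableEq V]

/-- The degree of a vertex. -/
noncomputable def deg (P : PlaneGraph V) (v : V) : ℕ := (P.graph.neighborSet v).ncard

/-- The list `l` is a facial cycle (in cyclic order). -/
def IsFacial (P : PlaneGraph V) (l : List V) : Prop := ∃ f, P.bounds f l

/-- Every path of length at most 3 joining `a` and `b` is a subgraph of the cycle `l`. -/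
def DiagSafe (P : PlaneGraph V) (l : List V) (a b : V) : Prop :=
  ∀ p : P.graph.Walk a b, p.IsPath → p.length ≤ 3 → ∀ e ∈ p.edges, e ∈ cycleEdges l

/-- A vertex is `C`-admissible if it is small (degree < 60) and not on `C`. -/
def Admissible (P : PlaneGraph V) (C : List V) (v : V) : Prop := P.deg v < 60 ∧ v ∉ C

def SafeTetragram (P : PlaneGraph V) (v1 v2 v3 v4 : V) : Prop :=
  P.IsFacial [v1, v2, v3, v4] ∧ P.DiagSafe [v1, v2, v3, v4] v1 v3

def SafeHexagram (P : PlaneGraph V) (v1 v2 v3 v4 v5 v6 : V) : Prop :=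
  P.IsFacial [v1, v2, v3, v4, v5, v6] ∧
    ∀ p : P.graph.Walk v1 v3, p.IsPath → p.length ≤ 3 → p.support = [v1, v2, v3]

/-- A facial 5-cycle whose first four vertices have degree 3, with `x i` the third
neighbor of `v i`. -/
def Pentagram (P : PlaneGraph V) (v1 v2 v3 v4 v5 x1 x2 x3 x4 : V) : Prop :=
  P.IsFacial [v1, v2, v3, v4, v5] ∧
  (P.deg v1 = 3 ∧ P.deg v2 = 3 ∧ P.deg v3 = 3 ∧ P.deg v4 = 3) ∧
  (P.graph.Adj v1 x1 ∧ x1 ≠ v5 ∧ x1 ≠ v2) ∧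
  (P.graph.Adj v2 x2 ∧ x2 ≠ v1 ∧ x2 ≠ v3) ∧
  (P.graph.Adj v3 x3 ∧ x3 ≠ v2 ∧ x3 ≠ v4) ∧
  (P.graph.Adj v4 x4 ∧ x4 ≠ v3 ∧ x4 ≠ v5)

def SafePentagram (P : PlaneGraph V) (v1 v2 v3 v4 v5 x1 x2 x3 x4 : V) : Prop :=
  List.Pairwise (fun a b => a ≠ b ∧ ¬P.graph.Adj a b) [x1, x2, x3, x4] ∧
  (∀ p : P.graph.Walk x2 v5, p.IsPath → p.length ≤ 3 →
      ¬∀ w ∈ p.support, w ∉ ([v1, v2, v3, v4] : List V)) ∧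
  (∀ p : P.graph.Walk x3 x4, p.IsPath → p.length ≤ 3 →
      (∀ w ∈ p.support, w ∉ ([v1, v2, v3, v4] : List V)) →
      p.length = 2 ∧ ∃ y, p.support = [x3, y, x4] ∧ P.IsFacial [x3, v3, v4, x4, y])

def SecureMonogram (P : PlaneGraph V) (C : List V) (v : V) : Prop :=
  P.deg v ≤ 2 ∧ v ∉ C

def SecureTetragram (P : PlaneGraph V) (C : List V) (v1 v2 v3 v4 : V) : Prop :=
  P.SafeTetragram v1 v2 v3 v4 ∧ P.Admissible C v1 ∧ P.deg v1 = 3 ∧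
  ∀ x, P.graph.Adj v1 x → x ≠ v2 → x ≠ v4 →
    P.Admissible C x ∧
      (P.Admissible C v3 ∨
        ∀ w, P.graph.Adj x w →
          P.Admissible C w ∨ P.IsFacial [v1, v2, w, x] ∨ P.IsFacial [v1, v4, w, x])

def SecureOctagram (P : PlaneGraph V) (C : List V) (v1 v2 v3 v4 : V) : Prop :=
  P.IsFacial [v1, v2, v3, v4] ∧
    ∀ v ∈ ([v1, v2, v3, v4] : List V), P.deg v = 3 ∧ P.Admissible C v

def SecurePentagram (P : PlaneGraph V) (C : List V) (v1 v2 v3 v4 v5 x1 x2 x3 x4 : V) : Prop :=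
  P.Pentagram v1 v2 v3 v4 v5 x1 x2 x3 x4 ∧
  P.SafePentagram v1 v2 v3 v4 v5 x1 x2 x3 x4 ∧
  (∀ v ∈ ([v1, v2, v3, v4, v5, x1, x2, x3, x4] : List V), P.Admissible C v) ∧
  ((∀ w, P.graph.Adj v5 w → P.Admissible C w) ∨ (∀ w, P.graph.Adj x2 w → P.Admissible C w)) ∧
  ((∀ w, P.graph.Adj x3 w → P.Admissible C w) ∨ (∀ w, P.graph.Adj x4 w → P.Admissible C w))

def SecureDecagram (P : PlaneGraph V) (C : List V) (v1 v2 v3 v4 v5 x1 x2 x3 x4 : V) : Prop :=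
  P.Pentagram v1 v2 v3 v4 v5 x1 x2 x3 x4 ∧ P.deg v5 = 3 ∧
  x1 ≠ x3 ∧ ¬P.graph.Adj x1 x3 ∧ (¬∃ y, P.graph.Adj x1 y ∧ P.graph.Adj y x3) ∧
  ∀ v ∈ ([v1, v2, v3, v4, v5, x1, x3] : List V), P.Admissible C v

def SecureHexagram (P : PlaneGraph V) (C : List V) (v1 v2 v3 v4 v5 v6 : V) : Prop :=
  P.SafeHexagram v1 v2 v3 v4 v5 v6 ∧
  P.Admissible C v1 ∧ P.Admissible C v3 ∧ P.Admissible C v6 ∧ P.deg v1 = 3 ∧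
  ∀ x, P.graph.Adj v1 x → x ≠ v2 → x ≠ v6 → P.Admissible C x

/-- `G` contains a `C`-secure multigram. -/
def HasSecureMultigram (P : PlaneGraph V) (C : List V) : Prop :=
  (∃ v, P.SecureMonogram C v) ∨
  (∃ v1 v2 v3 v4, P.SecureTetragram C v1 v2 v3 v4 ∨ P.SecureOctagram C v1 v2 v3 v4) ∨
  (∃ v1 v2 v3 v4 v5 x1 x2 x3 x4,
      P.SecurePentagram C v1 v2 v3 v4 v5 x1 x2 x3 x4 ∨
      P.SecureDecagram C v1 v2 v3 v4 v5 x1 x2 x3 x4) ∨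
  (∃ v1 v2 v3 v4 v5 v6, P.SecureHexagram C v1 v2 v3 v4 v5 v6)

end PlaneGraph

/-- Identify `v` with `u`: all edges at `v` are transferred to `u` (and `v` becomes
isolated); parallel edges are merged. -/
def identifyVerts {V : Type} [DecidableEq V] (G : SimpleGraph V) (u v : V) : SimpleGraph V :=
  SimpleGraph.fromRel fun a b =>
    ∃ x y, G.Adj x y ∧ (if x = v then u else x) = a ∧ (if y = v then u else y) = b

/-- Delete the vertices in `s` (they are kept as isolated vertices). -/
def deleteVerts {V : Type} (G : SimpleGraph V) (s : Set V) : SimpleGraph V :=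
  SimpleGraph.fromRel fun a b => G.Adj a b ∧ a ∉ s ∧ b ∉ s

/-- Add the edge `ab`. -/
def addEdge {V : Type} (G : SimpleGraph V) (a b : V) : SimpleGraph V :=
  G ⊔ SimpleGraph.fromRel fun x y => x = a ∧ y = b

/-- `G` can be drawn in the plane: vertices go to distinct points, edges to arcs, arcs are
simple, meet vertices only at their own endpoints, and two arcs of distinct edges meet
only at common endpoints. -/
def SimpleGraph.IsPlanar {V : Type} (G : SimpleGraph V) : Prop :=
  ∃ (pos : V → ℝ × ℝ) (arc : ∀ u v, G.Adj u v → _root_.Path (pos u) (pos v)),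
    Function.Injective pos ∧
    (∀ u v (h : G.Adj u v), Function.Injective (arc u v h)) ∧
    (∀ u v (h : G.Adj u v) (w : V), pos w ∈ Set.range (arc u v h) → w = u ∨ w = v) ∧
    (∀ u v u' v' (h : G.Adj u v) (h' : G.Adj u' v'), s(u, v) ≠ s(u', v') →
      ∀ p ∈ Set.range (arc u v h) ∩ Set.range (arc u' v' h'), ∃ w, p = pos w)

section Aux

variable {V : Type} [DecidableEq V] {G : SimpleGraph V} {u v : V}

private lemma identify_adj_cases {a b : V} (h : (identifyVerts G u v).Adj a b) :
    a ≠ b ∧ (G.Adj a b ∨ (a = u ∧ G.Adj v b) ∨ (b = u ∧ G.Adj a v)) := by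
  rw [identifyVerts, SimpleGraph.fromRel_adj] at h
  obtain ⟨hne, h | h⟩ := h <;> obtain ⟨x, y, hxy, hx, hy⟩ := h <;> refine ⟨hne, ?_⟩ <;>
    by_cases hxv : x = v <;> by_cases hyv : y = v
  · subst hxv; subst hyv; exact absurd rfl hxy.ne
  · subst hxv; simp only [if_pos rfl, if_neg hyv] at hx hy; subst hx; subst hy
    exact Or.inr (Or.inl ⟨rfl, hxy⟩)
  · subst hyv; simp only [if_pos rfl, if_neg hxv] at hx hy; subst hx; subst hy
    exact Or.inr (Or.inr ⟨rfl, hxy⟩)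
  · simp only [if_neg hxv, if_neg hyv] at hx hy; subst hx; subst hy; exact Or.inl hxy
  · subst hxv; subst hyv; exact absurd rfl hxy.ne
  · subst hxv; simp only [if_pos rfl, if_neg hyv] at hx hy; subst hx; subst hy
    exact Or.inr (Or.inr ⟨rfl, hxy.symm⟩)
  · subst hyv; simp only [if_pos rfl, if_neg hxv] at hx hy; subst hx; subst hy
    exact Or.inr (Or.inl ⟨rfl, hxy.symm⟩)
  · simp only [if_neg hxv, if_neg hyv] at hx hy; subst hx; subst hy; exact Or.inl hxy.symm

private lemma mixed_path_false (huv : u ≠ v) (hadj : ¬G.Adj u v)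
    (hpath : ∀ p : G.Walk u v, p.IsPath → 4 ≤ p.length)
    {b c : V} (h1 : G.Adj u b) (h2 : G.Adj v c) (hbc : G.Adj b c) : False := by
  have hbv : b ≠ v := fun h => hadj (h ▸ h1)
  have huc : u ≠ c := fun h => hadj (h ▸ h2).symm
  have hw : (SimpleGraph.Walk.cons h1 (.cons hbc (.cons h2.symm .nil))).IsPath := by
    simp [SimpleGraph.Walk.isPath_def, h1.ne, huc, huv, hbc.ne, hbv, h2.ne']
  have := hpath _ hw
  simp at this

private lemma aux_triangle (htf : G.CliqueFree 3) (huv : u ≠ v) (hadj : ¬G.Adj u v)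
    (hpath : ∀ p : G.Walk u v, p.IsPath → 4 ≤ p.length)
    {b c : V} (hb : G.Adj u b ∨ G.Adj v b) (hc : G.Adj u c ∨ G.Adj v c)
    (hbc : G.Adj b c) : False := by
  obtain hb | hb := hb <;> obtain hc | hc := hc
  · exact htf _ (SimpleGraph.is3Clique_triple_iff.mpr ⟨hb, hc, hbc⟩)
  · exact mixed_path_false huv hadj hpath hb hc hbc
  · exact mixed_path_false huv hadj hpath hc hb hbc.symm
  · exact htf _ (SimpleGraph.is3Clique_triple_iff.mpr ⟨hb, hc, hbc⟩)

end Aux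

/-- If `u` and `v` are nonadjacent vertices of a triangle-free graph joined by no path of
length less than 4, then identifying `u` and `v` keeps the graph triangle-free, and every
proper 3-coloring of the identified graph yields one of `G` giving `u` and `v` the same
color. -/
theorem identify_triangle_free_and_color {V : Type} [Fintype V] [DecidableEq V]
    (G : SimpleGraph V) (htf : G.CliqueFree 3) (u v : V) (huv : u ≠ v)
    (hadj : ¬G.Adj u v) (hpath : ∀ p : G.Walk u v, p.IsPath → 4 ≤ p.length) :
    (identifyVerts G u v).CliqueFree 3 ∧
    ∀ c' : (identifyVerts G u v).Coloring (Fin 3),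
      ∃ c : G.Coloring (Fin 3), c u = c v ∧ ∀ w, c w = c' (if w = v then u else w) := by
  constructor
  · intro t ht
    rw [SimpleGraph.is3Clique_iff] at ht
    obtain ⟨a, b, c, hab, hac, hbc, rfl⟩ := ht
    obtain ⟨nab, hab⟩ := identify_adj_cases hab
    obtain ⟨nac, hac⟩ := identify_adj_cases hac
    obtain ⟨nbc, hbc⟩ := identify_adj_cases hbc
    by_cases ha : a = u
    · subst ha
      have hb : G.Adj a b ∨ G.Adj v b := by
        rcases hab with h | ⟨_, h⟩ | ⟨h, _⟩
        · exact Or.inl h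
        · exact Or.inr h
        · exact absurd h.symm nab
      have hc : G.Adj a c ∨ G.Adj v c := by
        rcases hac with h | ⟨_, h⟩ | ⟨h, _⟩
        · exact Or.inl h
        · exact Or.inr h
        · exact absurd h.symm nac
      have hG : G.Adj b c := by
        rcases hbc with h | ⟨h, _⟩ | ⟨h, _⟩
        · exact h
        · exact absurd h.symm nab
        · exact absurd h.symm nac
      exact aux_triangle htf huv hadj hpath hb hc hG
    · by_cases hb : b = u
      · subst hb
        have ha' : G.Adj b a ∨ G.Adj v a := by
          rcases hab with h | ⟨h, _⟩ | ⟨_, h⟩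
          · exact Or.inl h.symm
          · exact absurd h ha
          · exact Or.inr h.symm
        have hc' : G.Adj b c ∨ G.Adj v c := by
          rcases hbc with h | ⟨_, h⟩ | ⟨h, _⟩
          · exact Or.inl h
          · exact Or.inr h
          · exact absurd h.symm nbc
        have hG : G.Adj a c := by
          rcases hac with h | ⟨h, _⟩ | ⟨h, _⟩
          · exact h
          · exact absurd h ha
          · exact absurd h.symm nbc
        exact aux_triangle htf huv hadj hpath ha' hc' hG
      · by_cases hc : c = u
        · subst hc
          have ha' : G.Adj c a ∨ G.Adj v a := by
            rcases hac with h | ⟨h, _⟩ | ⟨_, h⟩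
            · exact Or.inl h.symm
            · exact absurd h ha
            · exact Or.inr h.symm
          have hb' : G.Adj c b ∨ G.Adj v b := by
            rcases hbc with h | ⟨h, _⟩ | ⟨_, h⟩
            · exact Or.inl h.symm
            · exact absurd h hb
            · exact Or.inr h.symm
          have hG : G.Adj a b := by
            rcases hab with h | ⟨h, _⟩ | ⟨h, _⟩
            · exact h
            · exact absurd h ha
            · exact absurd h hb
          exact aux_triangle htf huv hadj hpath ha' hb' hG
        · have hG1 : G.Adj a b := by
            rcases hab with h | ⟨h, _⟩ | ⟨h, _⟩
            exacts [h, absurd h ha, absurd h hb]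
          have hG2 : G.Adj a c := by
            rcases hac with h | ⟨h, _⟩ | ⟨h, _⟩
            exacts [h, absurd h ha, absurd h hc]
          have hG3 : G.Adj b c := by
            rcases hbc with h | ⟨h, _⟩ | ⟨h, _⟩
            exacts [h, absurd h hb, absurd h hc]
          exact htf _ (SimpleGraph.is3Clique_triple_iff.mpr ⟨hG1, hG2, hG3⟩)
  · intro c'
    refine ⟨SimpleGraph.Coloring.mk (fun w => c' (if w = v then u else w)) ?_, ?_, fun w => rfl⟩
    · intro a b hab
      apply c'.valid
      rw [identifyVerts, SimpleGraph.fromRel_adj]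
      refine ⟨?_, Or.inl ⟨a, b, hab, rfl, rfl⟩⟩
      split_ifs with h1 h2 h2
      · exact absurd (h1.trans h2.symm) hab.ne
      · intro h
        rw [h1] at hab
        rw [← h] at hab
        exact hadj hab.symm
      · intro h
        rw [h2] at hab
        rw [h] at hab
        exact hadj hab
      · exact hab.ne
    · show c' (if u = v then u else u) = c' (if v = v then u else v)
      rw [if_neg huv, if_pos rfl]
end

section
/- Let G be a triangle-free graph containing a facial 4-cycle v1v2v3v4 with all four vertices of degree exactly 3 (an octagram). Then every proper 3-coloring of G − {v1, v2, v3, v4} extends to a proper 3-coloring of G. -/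
/-! The square `v1 v2 v3 v4` has no chords since the graph is triangle-free, and each `vi` has a
single neighbor `xi` off it. Give `v1` and `v3` a common color avoiding the colors of `x1` and
`x3`, then give each of `v2`, `v4` a color avoiding that one and the color of its own `xi`: with
three colors each choice avoids at most two. -/

theorem Set.exists_subset_triple_of_ncard_eq_three {α : Type*} {s : Set α} {a b : α}
    (hs : s.ncard = 3) (ha : a ∈ s) (hb : b ∈ s) (hab : a ≠ b) : ∃ x, s ⊆ {a, b, x} := by
  obtain ⟨x, hx⟩ : ∃ x, s \ {a, b} = {x} := by
    rw [← Set.ncard_eq_one, Set.ncard_sdiff (Set.pair_subset ha hb), hs, Set.ncard_pair hab]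
  refine ⟨x, fun w hw => ?_⟩
  by_cases hw' : w ∈ ({a, b} : Set α)
  · simp only [Set.mem_insert_iff, Set.mem_singleton_iff] at hw' ⊢
    tauto
  · have : w ∈ s \ {a, b} := ⟨hw, hw'⟩
    simp_all

theorem Fintype.exists_ne_ne_of_three_le_card {α : Type*} [Fintype α]
    (hα : 3 ≤ Fintype.card α) (x y : α) : ∃ a, a ≠ x ∧ a ≠ y := by
  classical
  obtain ⟨a, -, ha⟩ := Finset.exists_mem_notMem_of_card_lt_card
    (s := {x, y}) (t := Finset.univ) (Finset.card_le_two.trans_lt hα)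
  exact ⟨a, by simpa [not_or] using ha⟩

section DeleteVerts

variable {V : Type} {α : Type*} {G : SimpleGraph V} {s : Set V}

theorem deleteVerts_adj {a b : V} :
    (deleteVerts G s).Adj a b ↔ G.Adj a b ∧ a ∉ s ∧ b ∉ s := by
  simp only [deleteVerts, SimpleGraph.fromRel_adj]
  constructor
  · rintro ⟨-, h | ⟨h, hb, ha⟩⟩
    · exact h
    · exact ⟨h.symm, ha, hb⟩
  · exact fun h => ⟨h.1.ne, Or.inl h⟩

theorem exists_coloring_extending_deleteVerts (c' : (deleteVerts G s).Coloring α) (f : V → α)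
    (hf : ∀ w ∉ s, f w = c' w) (hs : ∀ u ∈ s, ∀ w, G.Adj u w → f u ≠ f w) :
    ∃ c : G.Coloring α, ∀ w ∉ s, c w = c' w := by
  refine ⟨SimpleGraph.Coloring.mk f fun {u w} huw => ?_, hf⟩
  by_cases hu : u ∈ s
  · exact hs u hu w huw
  by_cases hw : w ∈ s
  · exact (hs w hw u huw.symm).symm
  rw [hf u hu, hf w hw]
  exact c'.valid (deleteVerts_adj.2 ⟨huw, hu, hw⟩)

theorem exists_coloring_extending_deleteVerts_chordless_square [Fintype α]
    (hα : 3 ≤ Fintype.card α) {v1 v2 v3 v4 x1 x2 x3 x4 : V} (hnd : [v1, v2, v3, v4].Nodup)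
    (h13 : ¬G.Adj v1 v3) (h24 : ¬G.Adj v2 v4)
    (hN1 : G.neighborSet v1 ⊆ {v2, v4, x1}) (hN2 : G.neighborSet v2 ⊆ {v1, v3, x2})
    (hN3 : G.neighborSet v3 ⊆ {v2, v4, x3}) (hN4 : G.neighborSet v4 ⊆ {v3, v1, x4})
    (c' : (deleteVerts G {v1, v2, v3, v4}).Coloring α) :
    ∃ c : G.Coloring α, ∀ w ∉ ({v1, v2, v3, v4} : Set V), c w = c' w := by
  classical
  obtain ⟨a, ha1, ha3⟩ := Fintype.exists_ne_ne_of_three_le_card hα (c' x1) (c' x3)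
  obtain ⟨b2, hb2, hb2x⟩ := Fintype.exists_ne_ne_of_three_le_card hα a (c' x2)
  obtain ⟨b4, hb4, hb4x⟩ := Fintype.exists_ne_ne_of_three_le_card hα a (c' x4)
  let f : V → α := fun w =>
    if w = v1 ∨ w = v3 then a else if w = v2 then b2 else if w = v4 then b4 else c' w
  simp only [List.nodup_cons, List.mem_cons, List.not_mem_nil, or_false, not_or,
    List.nodup_nil, and_true] at hnd
  have hf : ∀ w ∉ ({v1, v2, v3, v4} : Set V), f w = c' w := by
    intro w hw
    simp only [Set.mem_insert_iff, Set.mem_singleton_iff, not_or] at hw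
    simp [f, hw]
  refine exists_coloring_extending_deleteVerts c' f hf fun u hu w huw => ?_
  by_cases hw : w ∈ ({v1, v2, v3, v4} : Set V)
  · -- the edges inside the square are its sides, each joining `{v1, v3}` to `{v2, v4}`
    simp only [Set.mem_insert_iff, Set.mem_singleton_iff] at hu hw
    rcases hu with rfl | rfl | rfl | rfl <;> rcases hw with rfl | rfl | rfl | rfl <;>
      simp_all [f, eq_comm, G.adj_comm]
  · have outer : ∀ {v a b x : V}, G.neighborSet v ⊆ {a, b, x} →
        a ∈ ({v1, v2, v3, v4} : Set V) → b ∈ ({v1, v2, v3, v4} : Set V) → G.Adj v w → w = x := by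
      intro v a b x hN ha hb hvw
      rcases hN hvw with rfl | rfl | rfl
      · exact absurd ha hw
      · exact absurd hb hw
      · rfl
    rw [hf w hw]
    simp only [Set.mem_insert_iff, Set.mem_singleton_iff] at hu
    rcases hu with rfl | rfl | rfl | rfl
    · rw [outer hN1 (by simp) (by simp) huw]
      simp_all [f, eq_comm]
    · rw [outer hN2 (by simp) (by simp) huw]
      simp_all [f, eq_comm]
    · rw [outer hN3 (by simp) (by simp) huw]
      simp_all [f, eq_comm]
    · rw [outer hN4 (by simp) (by simp) huw]
      simp_all [f, eq_comm]

end DeleteVerts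

/-- The octagram reduction: if a triangle-free plane graph has a facial 4-cycle all of
whose vertices have degree exactly 3, then every proper 3-coloring of the graph minus
these four vertices extends to a proper 3-coloring of the whole graph. -/
theorem octagram_extension {V : Type} [Fintype V] [DecidableEq V] (P : PlaneGraph V)
    (htf : P.graph.CliqueFree 3) (v1 v2 v3 v4 : V) (hf : P.IsFacial [v1, v2, v3, v4])
    (hdeg : ∀ v ∈ ([v1, v2, v3, v4] : List V), P.deg v = 3) :
    ∀ c' : (deleteVerts P.graph {v1, v2, v3, v4}).Coloring (Fin 3),
      ∃ c : P.graph.Coloring (Fin 3),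
        ∀ w, w ∉ ([v1, v2, v3, v4] : List V) → c w = c' w := by
  intro c'
  obtain ⟨face, hface⟩ := hf
  obtain ⟨-, hnd, hchain, hclose⟩ := P.bounds_isCycle face _ hface
  have hchain : [v1, v2, v3, v4].IsChain P.graph.Adj := hchain
  obtain ⟨a12, a23, a34⟩ : P.graph.Adj v1 v2 ∧ P.graph.Adj v2 v3 ∧ P.graph.Adj v3 v4 := by
    simpa using hchain
  have a41 : P.graph.Adj v4 v1 := by simpa using hclose (by simp)
  have n13 : ¬P.graph.Adj v1 v3 := fun h =>
    htf {v1, v2, v3} (SimpleGraph.is3Clique_triple_iff.mpr ⟨a12, h, a23⟩)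
  have n24 : ¬P.graph.Adj v2 v4 := fun h =>
    htf {v2, v3, v4} (SimpleGraph.is3Clique_triple_iff.mpr ⟨a23, h, a34⟩)
  have ne13 : v1 ≠ v3 := by rintro rfl; simp at hnd
  have ne24 : v2 ≠ v4 := by rintro rfl; simp at hnd
  obtain ⟨x1, hN1⟩ := Set.exists_subset_triple_of_ncard_eq_three (hdeg v1 (by simp))
    a12 a41.symm ne24
  obtain ⟨x2, hN2⟩ := Set.exists_subset_triple_of_ncard_eq_three (hdeg v2 (by simp))
    a12.symm a23 ne13
  obtain ⟨x3, hN3⟩ := Set.exists_subset_triple_of_ncard_eq_three (hdeg v3 (by simp))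
    a23.symm a34 ne24
  obtain ⟨x4, hN4⟩ := Set.exists_subset_triple_of_ncard_eq_three (hdeg v4 (by simp))
    a34.symm a41 ne13.symm
  obtain ⟨c, hc⟩ := exists_coloring_extending_deleteVerts_chordless_square (by simp) hnd n13 n24
    hN1 hN2 hN3 hN4 c'
  exact ⟨c, fun w hw => hc w (by simpa using hw)⟩
end

section
/- Let G be a plane graph drawn in the plane whose outer face is bounded by a cycle C of length ℓ with at least one vertex of degree at least 3, let every vertex of G not on C have degree at least 3, and suppose G ≠ C. If every bounded face of G has length at least 6 and every vertex of degree 3 not on C is incident only with faces of length at least 6, then using the discharging of Lemma 2.1 every bounded face of length at least 6 ends with nonnegative charge; consequently G must contain a bounded face of length at most 5. -/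
lemma PlaneGraph.bounds_rotate_n {V : Type} [Fintype V] [DecidableEq V] (P : PlaneGraph V)
    (f : P.Face) (l : List V) (h : P.bounds f l) : ∀ n, P.bounds f (l.rotate n) := by
  intro n
  induction n with
  | zero => simpa using h
  | succ n ih =>
    have := P.bounds_rotate _ _ ih
    rwa [List.rotate_rotate] at this

/-- every vertex on a facial cycle has two distinct neighbours. -/
lemma PlaneGraph.two_le_deg_of_mem {V : Type} [Fintype V] [DecidableEq V] (P : PlaneGraph V)
    (f : P.Face) (l : List V) (hb : P.bounds f l) {v : V} (hv : v ∈ l) : 2 ≤ P.deg v := by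
  classical
  obtain ⟨l₁, l₂, rfl⟩ := List.append_of_mem hv
  have hrot : (l₁ ++ v :: l₂) ~r (v :: (l₂ ++ l₁)) := by
    have : (l₁ ++ v :: l₂) ~r ((v :: l₂) ++ l₁) := List.isRotated_append
    simpa using this
  obtain ⟨n, hn⟩ := hrot
  have hb' : P.bounds f (v :: (l₂ ++ l₁)) := by
    rw [← hn]; exact P.bounds_rotate_n f _ hb n
  obtain ⟨h3, hnd, hch, hlast⟩ := P.bounds_isCycle f _ hb'
  obtain ⟨a, rest, hm⟩ : ∃ a rest, l₂ ++ l₁ = a :: rest := by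
    rcases hq : l₂ ++ l₁ with _ | ⟨a, rest⟩
    · rw [hq] at h3; simp at h3
    · exact ⟨a, rest, rfl⟩
  rw [hm] at h3 hnd hch hlast hb'
  have hrest : rest ≠ [] := by
    intro h; rw [h] at h3; simp at h3
  have hadj1 : P.graph.Adj v a := (List.isChain_cons_cons.1 hch).1
  set b := rest.getLast hrest with hbdef
  have hbmem : b ∈ rest := List.getLast_mem hrest
  have hadj2 : P.graph.Adj v b := by
    have := hlast (by simp)
    rw [List.getLast_cons (by simp), List.getLast_cons hrest] at this
    simpa using this.symm
  have hab : a ≠ b := by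
    have hnd' : a ∉ rest := by
      have := (List.nodup_cons.1 hnd).2
      exact (List.nodup_cons.1 this).1
    intro h; rw [h] at hnd'; exact hnd' hbmem
  have hsub : ({a, b} : Set V) ⊆ P.graph.neighborSet v := by
    rintro x (rfl | rfl)
    · exact hadj1
    · exact hadj2
  calc (2 : ℕ) = ({a, b} : Set V).ncard := (Set.ncard_pair hab).symm
    _ ≤ (P.graph.neighborSet v).ncard := Set.ncard_le_ncard hsub (Set.toFinite _)
    _ = P.deg v := rfl

/-- If all bounded faces had length at least 6 (and degree-3 vertices off `C` were
incident only with such faces), every bounded face would end the discharging of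
Lemma 2.1 with nonnegative charge; consequently the graph must contain a bounded face of
length at most 5. -/
theorem short_face_exists {V : Type} [Fintype V] [DecidableEq V] (P : PlaneGraph V)
    (hconn : P.graph.Connected) (C : List V) (hC : P.bounds P.outer C)
    (hlen : C.length ≤ 6) (hdegC : ∃ v ∈ C, 3 ≤ P.deg v)
    (hdeg : ∀ v, v ∉ C → 3 ≤ P.deg v)
    (hne : (∃ v, v ∉ C) ∨ (C.length : ℕ) < P.graph.edgeSet.ncard) :
    ((∀ f, f ≠ P.outer → 6 ≤ P.len f) →
      (∀ v, v ∉ C → P.deg v = 3 → ∀ f, P.vinc v f → 6 ≤ P.len f) →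
      ∀ f, f ≠ P.outer → 6 ≤ P.len f →
        0 ≤ (3 * (P.len f : ℤ) - 12)
            - Set.ncard {v | P.vinc v f ∧ v ∉ C ∧ P.deg v = 3}
            - Set.ncard {v | P.vinc v f ∧ v ∈ C ∧ P.deg v = 2}) ∧
    (∃ f, f ≠ P.outer ∧ P.len f ≤ 5) := by
  classical
  constructor
  · -- every long bounded face keeps nonnegative charge
    intro _ _ f hf hm
    set A := {v | P.vinc v f ∧ v ∉ C ∧ P.deg v = 3} with hA
    set B := {v | P.vinc v f ∧ v ∈ C ∧ P.deg v = 2} with hB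
    have hdisj : Disjoint A B := by
      rw [Set.disjoint_left]
      rintro v ⟨_, hv, _⟩ ⟨_, hv', _⟩
      exact hv hv'
    have hsub : A ∪ B ⊆ {v | P.vinc v f} := by
      rintro v (⟨h, _⟩ | ⟨h, _⟩) <;> exact h
    have hcard : A.ncard + B.ncard ≤ P.len f := by
      rw [← Set.ncard_union_eq hdisj (Set.toFinite _) (Set.toFinite _)]
      exact le_trans (Set.ncard_le_ncard hsub (Set.toFinite _)) (P.vinc_ncard_le f)
    have hm' : (6 : ℤ) ≤ (P.len f : ℤ) := by exact_mod_cast hm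
    have hcard' : (A.ncard : ℤ) + (B.ncard : ℤ) ≤ (P.len f : ℤ) := by exact_mod_cast hcard
    linarith
  · -- there must be a short bounded face
    by_contra hcon
    push_neg at hcon
    have h6 : ∀ f, f ≠ P.outer → 6 ≤ P.len f := fun f hf => hcon f hf
    letI : DecidableRel P.graph.Adj := Classical.decRel _
    -- degree bookkeeping
    have hdegeq : ∀ v, P.deg v = P.graph.degree v := by
      intro v
      rw [PlaneGraph.deg, ← Nat.card_coe_set_eq, Nat.card_eq_fintype_card,
        SimpleGraph.card_neighborSet_eq_degree]
    have hdegsum : ∑ v, P.graph.degree v = 2 * P.graph.edgeFinset.card :=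
      SimpleGraph.sum_degrees_eq_twice_card_edges _
    have hEeq : P.graph.edgeSet.ncard = P.graph.edgeFinset.card := by
      rw [← Nat.card_coe_set_eq, Nat.card_eq_fintype_card, SimpleGraph.edgeFinset_card]
    set E : ℤ := (P.graph.edgeSet.ncard : ℤ) with hE
    set nV : ℤ := (Fintype.card V : ℤ) with hnV
    set nF : ℤ := (Fintype.card P.Face : ℤ) with hnF
    set ℓ : ℤ := (C.length : ℤ) with hℓ
    -- Euler
    have hcc : Nat.card P.graph.ConnectedComponent = 1 := by
      rw [Nat.card_eq_one_iff_unique]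
      constructor
      · constructor
        intro a b
        refine SimpleGraph.ConnectedComponent.ind₂ (fun u v => ?_) a b
        exact SimpleGraph.ConnectedComponent.eq.2 (hconn.preconnected u v)
      · exact ⟨P.graph.connectedComponentMk (Classical.choice hconn.nonempty)⟩
    have heuler : nV - E + nF = 2 := by
      have := P.euler
      rw [hcc] at this
      push_cast at this ⊢
      linarith
    -- cycle facts
    obtain ⟨hC3, hCnd, -, -⟩ := P.bounds_isCycle _ _ hC
    have hlout : P.len P.outer = C.length := P.bounds_len _ _ hC
    -- face-length bound : ℓ + 6 (nF - 1) ≤ 2 E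
    have hFpos : (1 : ℤ) ≤ nF := by
      rw [hnF]
      exact_mod_cast Fintype.card_pos_iff.2 ⟨P.outer⟩
    have hfacesum : (P.len P.outer : ℤ) + ∑ f ∈ Finset.univ.erase P.outer, (P.len f : ℤ)
        = 2 * E := by
      have hsum := Finset.add_sum_erase Finset.univ (fun f => ((P.len f : ℤ))) (Finset.mem_univ P.outer)
      exact hsum.trans (P.handshake.trans (by rw [hE]))
    have herasecard : ((Finset.univ.erase P.outer).card : ℤ) = nF - 1 := by
      rw [Finset.card_erase_of_mem (Finset.mem_univ _), Finset.card_univ]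
      have : 1 ≤ Fintype.card P.Face := Fintype.card_pos_iff.2 ⟨P.outer⟩
      rw [hnF]
      push_cast [Nat.cast_sub this]
      ring
    have hfacebound : 6 * (nF - 1) ≤ ∑ f ∈ Finset.univ.erase P.outer, (P.len f : ℤ) := by
      have := Finset.card_nsmul_le_sum (Finset.univ.erase P.outer)
        (fun f => (P.len f : ℤ)) 6 (fun f hf => by
          show (6 : ℤ) ≤ (P.len f : ℤ)
          exact_mod_cast h6 f (Finset.ne_of_mem_erase hf))
      rw [nsmul_eq_mul] at this
      calc 6 * (nF - 1) = ((Finset.univ.erase P.outer).card : ℤ) * 6 := by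
            rw [herasecard]; ring
        _ ≤ _ := this
    have hB : ℓ + 6 * (nF - 1) ≤ 2 * E := by
      rw [← hfacesum, hlout]
      have : (C.length : ℤ) = ℓ := rfl
      linarith
    -- degree bound : 3 nV - ℓ + 1 ≤ 2 E
    set s : Finset V := C.toFinset with hs
    have hscard : (s.card : ℤ) = ℓ := by
      rw [hs, List.toFinset_card_of_nodup hCnd]
    have hsdeg : 2 * ℓ + 1 ≤ ∑ v ∈ s, (P.deg v : ℤ) := by
      obtain ⟨v0, hv0C, hv0d⟩ := hdegC
      have h1 : (1 : ℤ) ≤ ∑ v ∈ s, ((P.deg v : ℤ) - 2) := by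
        refine le_trans ?_ (Finset.single_le_sum (f := fun v => (P.deg v : ℤ) - 2)
          (fun v hv => ?_) (List.mem_toFinset.2 hv0C))
        · show (1 : ℤ) ≤ (P.deg v0 : ℤ) - 2
          have : (3 : ℤ) ≤ (P.deg v0 : ℤ) := by exact_mod_cast hv0d
          linarith
        · show (0 : ℤ) ≤ (P.deg v : ℤ) - 2
          have := P.two_le_deg_of_mem _ _ hC (List.mem_toFinset.1 hv)
          have : (2 : ℤ) ≤ (P.deg v : ℤ) := by exact_mod_cast this
          linarith
      rw [Finset.sum_sub_distrib, Finset.sum_const, nsmul_eq_mul] at h1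
      have : (s.card : ℤ) * 2 = 2 * ℓ := by rw [hscard]; ring
      linarith
    have hccard : ((sᶜ : Finset V).card : ℤ) = nV - ℓ := by
      rw [Finset.card_compl]
      have hle : s.card ≤ Fintype.card V := Finset.card_le_univ s
      push_cast [Nat.cast_sub hle]
      rw [hscard, hnV]
    have hcdeg : 3 * (nV - ℓ) ≤ ∑ v ∈ sᶜ, (P.deg v : ℤ) := by
      have := Finset.card_nsmul_le_sum (sᶜ : Finset V) (fun v => (P.deg v : ℤ)) 3
        (fun v hv => by
          have hvC : v ∉ C := fun h => (Finset.mem_compl.1 hv) (List.mem_toFinset.2 h)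
          show (3 : ℤ) ≤ (P.deg v : ℤ)
          exact_mod_cast hdeg v hvC)
      rw [nsmul_eq_mul] at this
      calc 3 * (nV - ℓ) = ((sᶜ : Finset V).card : ℤ) * 3 := by rw [hccard]; ring
        _ ≤ _ := this
    have hdegtotal : ∑ v, (P.deg v : ℤ) = 2 * E := by
      have h1 : ∑ v, (P.deg v : ℤ) = ((∑ v, P.graph.degree v : ℕ) : ℤ) := by
        push_cast
        exact Finset.sum_congr rfl fun v _ => by rw [hdegeq]
      rw [h1, hdegsum, hE, hEeq]
      push_cast
      ring
    have hsplit : ∑ v ∈ s, (P.deg v : ℤ) + ∑ v ∈ sᶜ, (P.deg v : ℤ) = 2 * E := by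
      rw [Finset.sum_add_sum_compl, hdegtotal]
    have hA' : 3 * nV - ℓ + 1 ≤ 2 * E := by linarith
    -- combine
    have hl6 : ℓ ≤ 6 := by rw [hℓ]; exact_mod_cast hlen
    linarith
end
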